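/- Let ψ be the binary morphism with ψ(0) = 0110101100101100101001 and ψ(1) = 1001010011010011010110. Then no nonempty prefix of the infinite word ψ(t) is a square, where t is the Thue–Morse word. -/

import Mathlib

/-- A square is a word of the form XX with X nonempty. -/
def IsSquare' {α : Type*} (w : List α) : Prop :=
  ∃ X : List α, X ≠ [] ∧ w = X ++ X

/-- The Thue–Morse word: the n-th letter (0-indexed) is the parity of the number
of 1s in the binary expansion of n. -/
def thueMorse (n : ℕ) : Fin 2 := (Fin.ofNat 2 (Nat.digits 2 n).sum : Fin 2)

/-- The finite prefix of length n of an infinite word. -/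
def wordPrefix {α : Type*} (s : ℕ → α) (n : ℕ) : List α := (List.range n).map s

/-- Apply the binary morphism determined by letter images `h` to a word. -/
def applyMorphism {α : Type*} (h : α → List α) (w : List α) : List α := w.flatMap h

/-- The binary morphism ψ with ψ(0) = 0110101100101100101001 and
ψ(1) = 1001010011010011010110. -/
def psi : Fin 2 → List (Fin 2) := fun a =>
  if a = 0 then [0,1,1,0,1,0,1,1,0,0,1,0,1,1,0,0,1,0,1,0,0,1]
  else [1,0,0,1,0,1,0,0,1,1,0,1,0,0,1,1,0,1,0,1,1,0]

/-!
Letter `22 q + j` of ψ(t) is letter `j` of ψ(t q), and every ψ(a) starts with `a`. A square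
prefix of half-length `m = 22 q + d` with `d < 22` is impossible in each case: for `d = 0` it
restricts to a square prefix of `t` of half-length `q`, which `t` does not have (halve an even
half-length; an odd one `2r + 1` fails at position `2r`, as t(4r+1) ≠ t(2r)); for `0 < d` and
`q = 0` it is a short square prefix of ψ(01); for `0 < d < 22 ≤ m` it puts ψ(0) at offset `d`
inside some ψ(ab). The last two are finite checks.
-/

section SquarePrefix

variable {α : Type*}

def HasSquarePrefix (f : ℕ → α) (m : ℕ) : Prop :=
  ∀ i < m, f i = f (i + m)

theorem hasSquarePrefix_of_prefix {f : ℕ → α} {N : ℕ} {X : List α}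
    (h : X ++ X <+: wordPrefix f N) : HasSquarePrefix f X.length := by
  have hlen : 2 * X.length ≤ N := by simpa [wordPrefix, two_mul] using h.length_le
  have hf : ∀ i (hi : i < 2 * X.length), f i = (X ++ X)[i]'(by simp; omega) := by
    intro i hi
    rw [h.getElem (by simp; omega)]
    simp [wordPrefix]
  intro i hi
  rw [hf i (by omega), hf (i + X.length) (by omega), List.getElem_append_left hi,
    List.getElem_append_right (by omega)]
  simp

end SquarePrefix

section ThueMorse

theorem thueMorse_zero : thueMorse 0 = 0 := rfl

theorem thueMorse_two_mul (n : ℕ) : thueMorse (2 * n) = thueMorse n := by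
  rcases Nat.eq_zero_or_pos n with rfl | hn
  · rfl
  · simp only [thueMorse, Nat.digits_def' one_lt_two (by omega : 0 < 2 * n), List.sum_cons,
      Nat.mul_mod_right, Nat.mul_div_cancel_left n two_pos, zero_add]

theorem thueMorse_two_mul_add_one (n : ℕ) : thueMorse (2 * n + 1) = thueMorse n + 1 := by
  have hmod : (2 * n + 1) % 2 = 1 := by omega
  have hdiv : (2 * n + 1) / 2 = n := by omega
  simp only [thueMorse, Nat.digits_def' one_lt_two (Nat.succ_pos (2 * n)), List.sum_cons, hmod,
    hdiv]
  ext
  simp only [Fin.val_add, Fin.val_ofNat]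
  omega

theorem thueMorse_one : thueMorse 1 = 1 := thueMorse_two_mul_add_one 0

theorem thueMorse_not_hasSquarePrefix {m : ℕ} (hm : 0 < m) : ¬ HasSquarePrefix thueMorse m := by
  induction m using Nat.strong_induction_on with
  | _ m ih =>
  intro hsq
  obtain ⟨r, rfl | rfl⟩ := Nat.even_or_odd' m
  · refine ih r (by omega) (by omega) fun i hi => ?_
    have h := hsq (2 * i) (by omega)
    rwa [← mul_add, thueMorse_two_mul, thueMorse_two_mul] at h
  · have h := hsq (2 * r) (by omega)
    rw [show 2 * r + (2 * r + 1) = 2 * (2 * r) + 1 by ring, thueMorse_two_mul_add_one,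
      thueMorse_two_mul, left_eq_add] at h
    exact absurd h (by decide)

end ThueMorse

section UniformMorphism

variable {α : Type*} [Inhabited α] (h : α → List α) (L : ℕ) (s : ℕ → α)

def uniformImage (n : ℕ) : α :=
  (h (s (n / L))).getD (n % L) default

variable {h L s}

theorem uniformImage_mul_add {q j : ℕ} (hj : j < L) :
    uniformImage h L s (L * q + j) = (h (s q)).getD j default := by
  have hL : 0 < L := by omega
  simp only [uniformImage, Nat.mul_add_div hL, Nat.mul_add_mod, Nat.div_eq_of_lt hj,
    Nat.mod_eq_of_lt hj, add_zero]

theorem uniformImage_mul_add_of_lt_two_mul (hL : ∀ a, (h a).length = L) {q j : ℕ}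
    (hj : j < 2 * L) :
    uniformImage h L s (L * q + j) = (h (s q) ++ h (s (q + 1))).getD j default := by
  rcases Nat.lt_or_ge j L with hjL | hjL
  · rw [uniformImage_mul_add hjL, List.getD_append _ _ _ _ (by rw [hL]; exact hjL)]
  · rw [show L * q + j = L * (q + 1) + (j - L) by rw [mul_add]; omega,
      uniformImage_mul_add (by omega), List.getD_append_right _ _ _ _ (by rw [hL]; exact hjL),
      hL]

theorem applyMorphism_wordPrefix (hL : ∀ a, (h a).length = L) (k : ℕ) :
    applyMorphism h (wordPrefix s k) = wordPrefix (uniformImage h L s) (L * k) := by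
  induction k with
  | zero => rfl
  | succ k ih =>
    have hblock : (List.range L).map (fun j => uniformImage h L s (L * k + j)) = h (s k) := by
      refine List.ext_getElem (by simp [hL]) fun j hj _ => ?_
      rw [List.length_map, List.length_range] at hj
      rw [List.getElem_map, List.getElem_range, uniformImage_mul_add hj,
        List.getD_eq_getElem _ _ (by rw [hL]; exact hj)]
    simp only [applyMorphism, wordPrefix, List.range_succ, List.map_append, List.flatMap_append,
      List.map_singleton, List.flatMap_singleton] at ih ⊢
    rw [ih, mul_add, mul_one, List.range_add, List.map_append, List.map_map, ← hblock]
    rfl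

end UniformMorphism

section Psi

theorem psi_length : ∀ a, (psi a).length = 22 := by decide

theorem psi_getD_zero : ∀ a, (psi a).getD 0 default = a := by decide

theorem psi_zero_psi_one_no_short_square_prefix : ∀ d < 22, 0 < d →
    ∃ i < d, (psi 0 ++ psi 1).getD i default ≠ (psi 0 ++ psi 1).getD (i + d) default := by
  decide

theorem psi_zero_not_interior_factor : ∀ d < 22, 0 < d → ∀ a b,
    ∃ i < 22, (psi 0).getD i default ≠ (psi a ++ psi b).getD (i + d) default := by
  decide

theorem uniformImage_psi_thueMorse_not_hasSquarePrefix {m : ℕ} (hm : 0 < m) :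
    ¬ HasSquarePrefix (uniformImage psi 22 thueMorse) m := by
  intro hsq
  obtain ⟨q, d, hd, rfl⟩ : ∃ q d, d < 22 ∧ m = 22 * q + d :=
    ⟨m / 22, m % 22, Nat.mod_lt _ (by norm_num), (Nat.div_add_mod m 22).symm⟩
  have hshift : ∀ i, i + d < 44 → uniformImage psi 22 thueMorse (i + (22 * q + d)) =
      (psi (thueMorse q) ++ psi (thueMorse (q + 1))).getD (i + d) default := fun i hi => by
    rw [show i + (22 * q + d) = 22 * q + (i + d) by ring]
    exact uniformImage_mul_add_of_lt_two_mul psi_length (by omega)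
  have hstart : ∀ i < 22, uniformImage psi 22 thueMorse i = (psi 0).getD i default :=
    fun i hi => by simpa [thueMorse_zero] using uniformImage_mul_add (s := thueMorse) (q := 0) hi
  rcases Nat.eq_zero_or_pos d with rfl | hd0
  · refine thueMorse_not_hasSquarePrefix (m := q) (by omega) fun i hi => ?_
    have h := hsq (22 * i) (by omega)
    rwa [← add_zero (22 * i), show 22 * i + 0 + (22 * q + 0) = 22 * (i + q) + 0 by ring,
      uniformImage_mul_add (by norm_num), uniformImage_mul_add (by norm_num),
      psi_getD_zero, psi_getD_zero] at h
  rcases Nat.eq_zero_or_pos q with rfl | hq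
  · obtain ⟨i, hi, hne⟩ := psi_zero_psi_one_no_short_square_prefix d hd hd0
    refine hne ?_
    rw [List.getD_append _ _ _ _ (by rw [psi_length]; omega), ← hstart i (by omega),
      hsq i (by omega), hshift i (by omega), thueMorse_zero, zero_add, thueMorse_one]
  · obtain ⟨i, hi, hne⟩ := psi_zero_not_interior_factor d hd hd0 (thueMorse q) (thueMorse (q + 1))
    exact hne (by rw [← hstart i hi, hsq i (by omega), hshift i (by omega)])

end Psi

theorem no_prefix_of_psi_image_is_square_general (k : ℕ) (p : List (Fin 2))
    (hpre : p <+: applyMorphism psi (wordPrefix thueMorse k)) : ¬ IsSquare' p := by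
  rintro ⟨X, hX, rfl⟩
  rw [applyMorphism_wordPrefix psi_length] at hpre
  exact uniformImage_psi_thueMorse_not_hasSquarePrefix (List.length_pos_iff.mpr hX)
    (hasSquarePrefix_of_prefix hpre)

/-- No nonempty prefix of ψ(t) is a square: every nonempty prefix of the image of the
infinite Thue–Morse word is a prefix of the image of some finite prefix of t,
and vice versa. -/
theorem no_prefix_of_psi_image_is_square (k : ℕ) (p : List (Fin 2)) (hp : p ≠ [])
    (hpre : p <+: applyMorphism psi (wordPrefix thueMorse k)) : ¬ IsSquare' p :=
  no_prefix_of_psi_image_is_square_general k p hpre
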